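/- arXiv:math/0304415 — 12 statements merged into one kernel-verified Lean document; each statement's English description precedes it below -/
import Mathlib

section
/- Let a > 1 and d be positive integers with d ≡ 1 (mod 4), and suppose (x, y) are integers with x² − d y² = 4a² and x ≡ 2a (mod d). Write x = 2a − k d. Then k = −α q² for some integer q and some square-free integer α dividing 2a, and moreover y = α q p for some integer p satisfying p² − d q² = 4a/α. -/
private lemma sqf_neg {s : ℤ} (hs : Squarefree s) : Squarefree (-s) := by
  intro x hx
  exact hs x ((dvd_neg).mp hx)

private lemma sqf_decomp (v : ℤ) : ∃ α p : ℤ, Squarefree α ∧ v = α * p ^ 2 := by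
  obtain ⟨s, b, hsb, hs⟩ := Nat.sq_mul_squarefree v.natAbs
  have hs' : Squarefree (s : ℤ) := Int.squarefree_natCast.mpr hs
  rcases Int.natAbs_eq v with h | h
  · refine ⟨(s : ℤ), (b : ℤ), hs', ?_⟩
    rw [h, ← hsb]; push_cast; ring
  · refine ⟨-(s : ℤ), (b : ℤ), sqf_neg hs', ?_⟩
    rw [h, ← hsb]; push_cast; ring

private lemma key : ∀ n : ℕ, ∀ u v y : ℤ, u.natAbs = n → u * v = y ^ 2 →
    ∃ α q p : ℤ, Squarefree α ∧ u = α * q ^ 2 ∧ v = α * p ^ 2 ∧ y = α * q * p := by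
  intro n
  induction n using Nat.strong_induction_on with
  | _ n IH =>
  intro u v y hn huv
  by_cases hu0 : u = 0
  · subst hu0
    have hy : y = 0 := by
      have : y ^ 2 = 0 := by linarith [huv]
      exact pow_eq_zero_iff (n := 2) (by norm_num) |>.mp this
    obtain ⟨α, p, hα, hv⟩ := sqf_decomp v
    exact ⟨α, 0, p, hα, by ring, hv, by rw [hy]; ring⟩
  by_cases hsq : Squarefree u
  · have hdvd : u ∣ y ^ 2 := ⟨v, huv.symm⟩
    have hdy : u ∣ y := (hsq.dvd_pow_iff_dvd (by norm_num)).mp hdvd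
    obtain ⟨t, ht⟩ := hdy
    refine ⟨u, 1, t, hsq, by ring, ?_, by rw [ht]; ring⟩
    have : u * v = u * (u * t ^ 2) := by rw [huv, ht]; ring
    have := mul_left_cancel₀ hu0 this
    linarith [this]
  · rw [Squarefree] at hsq
    push_neg at hsq
    obtain ⟨x, hxu, hxunit⟩ := hsq
    have hx0 : x ≠ 0 := by
      rintro rfl
      exact hu0 (zero_dvd_iff.mp (by simpa using hxu))
    have hxabs : x.natAbs ≠ 1 := fun h => hxunit (Int.isUnit_iff_natAbs_eq.mpr h)
    obtain ⟨ρ, hρ, hρx⟩ := Int.exists_prime_and_dvd hxabs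
    have hρ2u : ρ * ρ ∣ u := dvd_trans (mul_dvd_mul hρx hρx) hxu
    obtain ⟨u', hu'⟩ := hρ2u
    have hρy : ρ ∣ y := by
      refine hρ.dvd_of_dvd_pow (n := 2) ?_
      rw [← huv, hu']
      exact ⟨ρ * u' * v, by ring⟩
    obtain ⟨y', hy'⟩ := hρy
    have hρ0 : ρ ≠ 0 := hρ.ne_zero
    have huv' : u' * v = y' ^ 2 := by
      have h2 : (ρ * ρ) * (u' * v) = (ρ * ρ) * y' ^ 2 := by
        rw [← mul_assoc, ← hu', huv, hy']; ring
      exact mul_left_cancel₀ (mul_ne_zero hρ0 hρ0) h2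
    have hu'0 : u' ≠ 0 := by
      rintro rfl
      exact hu0 (by simpa using hu')
    have hlt : u'.natAbs < n := by
      rw [← hn, hu', Int.natAbs_mul, Int.natAbs_mul]
      have h2 : 2 ≤ ρ.natAbs := (Int.prime_iff_natAbs_prime.mp hρ).two_le
      have h1 : 1 ≤ u'.natAbs := Int.natAbs_pos.mpr hu'0
      have h3 : 2 * 2 * u'.natAbs ≤ ρ.natAbs * ρ.natAbs * u'.natAbs :=
        Nat.mul_le_mul (Nat.mul_le_mul h2 h2) le_rfl
      omega
    obtain ⟨α, q', p, hα, hu'eq, hveq, hy'eq⟩ := IH u'.natAbs hlt u' v y' rfl huv'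
    exact ⟨α, ρ * q', p, hα, by rw [hu', hu'eq]; ring, hveq, by rw [hy', hy'eq]; ring⟩

theorem stmt_0 (a d : ℤ) (ha : 1 < a) (hd : 0 < d) (hd1 : d ≡ 1 [ZMOD 4])
    (x y k : ℤ) (hxy : x ^ 2 - d * y ^ 2 = 4 * a ^ 2)
    (hx : x ≡ 2 * a [ZMOD d]) (hk : x = 2 * a - k * d) :
    ∃ α q p : ℤ, Squarefree α ∧ α ∣ 2 * a ∧ k = -α * q ^ 2 ∧ y = α * q * p ∧
      α * (p ^ 2 - d * q ^ 2) = 4 * a := by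
  have hy2 : (-k) * (4 * a - k * d) = y ^ 2 := by
    have h := hxy
    rw [hk] at h
    have hd0 : d ≠ 0 := hd.ne'
    have : d * (k ^ 2 * d - 4 * a * k - y ^ 2) = 0 := by ring_nf; ring_nf at h; linarith
    have h2 : k ^ 2 * d - 4 * a * k - y ^ 2 = 0 := by
      rcases mul_eq_zero.mp this with h' | h'
      · exact absurd h' hd0
      · exact h'
    nlinarith [h2]
  obtain ⟨α, q, p, hα, hkeq, hveq, hyeq⟩ := key (-k).natAbs (-k) (4 * a - k * d) y rfl hy2
  have hα0 : α ≠ 0 := hα.ne_zero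
  have hαk : α ∣ k := ⟨-q ^ 2, by linarith [hkeq]⟩
  have hα4a : α ∣ 4 * a := by
    have : α ∣ 4 * a - k * d := ⟨p ^ 2, hveq⟩
    have h2 : α ∣ k * d := hαk.mul_right d
    simpa using dvd_add this h2
  have hα2a : α ∣ 2 * a := by
    have h1 : α ∣ (2 * a) ^ 2 := dvd_trans hα4a ⟨a, by ring⟩
    exact (hα.dvd_pow_iff_dvd (by norm_num)).mp h1
  refine ⟨α, q, p, hα, hα2a, by linarith [hkeq], hyeq, ?_⟩
  have : α * p ^ 2 = 4 * a - k * d := hveq.symm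
  have hk' : α * q ^ 2 = -k := hkeq.symm
  nlinarith [this, hk']
end

section
/- Let a > 1 be an integer, μ an integer coprime to 2a², and d a positive integer with d ≡ μ² (mod 4a²). Let α be a square-free integer dividing 2a and (p,q) integers with p² − d q² = 4a/α. Set (x,y) = (2a + α d q², α p q). If x ≡ μ y (mod 2a²), then a divides p − μ q and 2 ≡ α p ((p − μq)/a) (mod 2a). -/
lemma aux_nat (n c m : ℕ) (hn : n ≠ 0) (hc : Squarefree c) (h : n ^ 2 ∣ c * m ^ 2) :
    n ∣ m := by
  rcases eq_or_ne m 0 with rfl | hm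
  · exact dvd_zero n
  have hc0 : c ≠ 0 := hc.ne_zero
  rw [← Nat.factorization_le_iff_dvd hn hm]
  have h' := (Nat.factorization_le_iff_dvd (pow_ne_zero 2 hn)
    (mul_ne_zero hc0 (pow_ne_zero 2 hm))).mpr h
  intro r
  have hp := h' r
  simp [Nat.factorization_mul hc0 (pow_ne_zero 2 hm), Nat.factorization_pow] at hp
  have hcp : c.factorization r ≤ 1 := hc.natFactorization_le_one r
  omega

theorem stmt_2 (a d μ α p q : ℤ) (ha : 1 < a) (hd : 0 < d)
    (hμ : IsCoprime μ (2 * a ^ 2)) (hdμ : d ≡ μ ^ 2 [ZMOD 4 * a ^ 2])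
    (hα : Squarefree α) (hαa : α ∣ 2 * a)
    (hpq : α * (p ^ 2 - d * q ^ 2) = 4 * a)
    (hxy : (2 * a + α * d * q ^ 2) ≡ μ * (α * p * q) [ZMOD 2 * a ^ 2]) :
    a ∣ p - μ * q ∧ (2 : ℤ) ≡ α * p * ((p - μ * q) / a) [ZMOD 2 * a] := by
  have ha0 : a ≠ 0 := by omega
  obtain ⟨k, hk⟩ := Int.ModEq.dvd hxy
  obtain ⟨l, hl⟩ := Int.ModEq.dvd hdμ
  -- hk : μ*(α*p*q) - (2*a + α*d*q^2) = 2*a^2 * k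
  -- hl : μ^2 - d = 4*a^2 * l
  have h1 : α * p * (p - μ * q) - 2 * a = 2 * a ^ 2 * (-k) := by
    linear_combination -hk + hpq
  have h2 : α * (p - μ * q) ^ 2 = 4 * a ^ 2 * (-k + α * q ^ 2 * l) := by
    linear_combination 2 * h1 + α * q ^ 2 * hl - hpq
  have h3 : a ^ 2 ∣ α * (p - μ * q) ^ 2 := ⟨4 * (-k + α * q ^ 2 * l), by linarith [h2]⟩
  have hdvd : a ∣ p - μ * q := by
    rw [← Int.natAbs_dvd_natAbs]
    have h4 := Int.natAbs_dvd_natAbs.mpr h3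
    rw [Int.natAbs_mul, Int.natAbs_pow, Int.natAbs_pow] at h4
    exact aux_nat _ _ _ (by simpa using ha0) (Int.squarefree_natAbs.mpr hα) h4
  refine ⟨hdvd, ?_⟩
  obtain ⟨t, ht⟩ := hdvd
  rw [ht, Int.mul_ediv_cancel_left _ ha0, Int.modEq_iff_dvd]
  have h5 : a * (α * p * t - 2) = a * (2 * a * (-k)) := by
    linear_combination h1 - α * p * ht
  exact ⟨-k, mul_left_cancel₀ ha0 h5⟩
end

section
/- Let a > 1 be an integer, μ an integer coprime to 2a², d a positive integer with d ≡ μ² (mod 4a²), α a square-free integer dividing 2a, and (p,q) integers with p² − d q² = 4a/α. If a divides p − μq and 2 ≡ α p ((p − μq)/a) (mod 2a), then α divides 2, i.e. α ∈ {1, −1, 2, −2}. -/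
theorem stmt_3 (a d μ α p q : ℤ) (ha : 1 < a) (hd : 0 < d)
    (hμ : IsCoprime μ (2 * a ^ 2)) (hdμ : d ≡ μ ^ 2 [ZMOD 4 * a ^ 2])
    (hα : Squarefree α) (hαa : α ∣ 2 * a)
    (hpq : α * (p ^ 2 - d * q ^ 2) = 4 * a)
    (hdiv : a ∣ p - μ * q)
    (hcong : (2 : ℤ) ≡ α * p * ((p - μ * q) / a) [ZMOD 2 * a]) :
    α = 1 ∨ α = -1 ∨ α = 2 ∨ α = -2 := by
  have hα0 : α ≠ 0 := hα.ne_zero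
  -- every prime divisor of α divides 2
  have key : ∀ r : ℤ, Prime r → r ∣ α → r ∣ 2 := by
    intro r hr hrα
    by_contra hr2
    have hra : r ∣ a := by
      rcases hr.dvd_mul.mp (hrα.trans hαa) with h | h
      · exact absurd h hr2
      · exact h
    have h1 : (2 * a) ∣ (α * p * ((p - μ * q) / a) - 2) := hcong.dvd
    have h2' : r ∣ (α * p * ((p - μ * q) / a) - 2) :=
      (Dvd.dvd.mul_left hra 2).trans h1
    have h3 : r ∣ α * p * ((p - μ * q) / a) :=
      ((hrα.mul_right p).mul_right _)
    have : r ∣ 2 := by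
      have := dvd_sub h3 h2'
      simpa using this
    exact hr2 this
  -- translate to natAbs
  have hnkey : ∀ r : ℕ, r.Prime → r ∣ α.natAbs → r = 2 := by
    intro r hr hrn
    have hrz : (r : ℤ) ∣ α := Int.natCast_dvd_natCast.mpr hrn |>.trans (Int.natAbs_dvd.mpr dvd_rfl)
    have hrp : Prime (r : ℤ) := Int.prime_iff_natAbs_prime.mpr (by simpa using hr)
    have h2 := key r hrp hrz
    have h2' : r ∣ 2 := by exact_mod_cast h2
    exact ((Nat.prime_dvd_prime_iff_eq hr Nat.prime_two).mp h2')
  have hn0 : α.natAbs ≠ 0 := fun h => hα0 (Int.natAbs_eq_zero.mp h)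
  have hpow : α.natAbs = 2 ^ α.natAbs.primeFactorsList.length :=
    Nat.eq_prime_pow_of_unique_prime_dvd hn0 (fun {d} hd hdd => hnkey d hd hdd)
  have hsn : Squarefree α.natAbs := Int.squarefree_natAbs.mpr hα
  have hk : α.natAbs.primeFactorsList.length ≤ 1 := by
    by_contra hk
    push_neg at hk
    have : 2 ^ 2 ∣ α.natAbs := by
      rw [hpow]; exact pow_dvd_pow 2 hk
    exact Nat.prime_two.not_isUnit (hsn 2 this)
  have : α.natAbs = 1 ∨ α.natAbs = 2 := by
    interval_cases h : α.natAbs.primeFactorsList.length <;> simp [hpow, h] <;> omega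
  rcases Int.natAbs_eq α with h | h <;> omega
end

section
/- Let a > 1 be an integer, μ an integer coprime to 2a², d a positive integer with d ≡ μ² (mod 4a²), and α ∈ {1, −1}. Let (p,q) be integers with p² − d q² = 4a/α. Then the associated pair (x,y) = (2a + α d q², α p q) satisfies x ≡ μ y (mod 2a²) if and only if p ≡ μ q (mod 2a). -/
theorem stmt_4 (a d μ α p q : ℤ) (ha : 1 < a) (hd : 0 < d)
    (hμ : IsCoprime μ (2 * a ^ 2)) (hdμ : d ≡ μ ^ 2 [ZMOD 4 * a ^ 2])
    (hα : α = 1 ∨ α = -1)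
    (hpq : p ^ 2 - d * q ^ 2 = 4 * a * α) :
    ((2 * a + α * d * q ^ 2) ≡ μ * (α * p * q) [ZMOD 2 * a ^ 2]) ↔
      p ≡ μ * q [ZMOD 2 * a] := by
  have hα2 : α * α = 1 := by rcases hα with h | h <;> simp [h]
  obtain ⟨n, hn⟩ := Int.ModEq.dvd hdμ
  rw [Int.modEq_iff_dvd, Int.modEq_iff_dvd]
  constructor
  · rintro ⟨k, hk⟩
    have hsq : (μ * q - p) ^ 2 = (2 * a) ^ 2 * (n * q ^ 2 - α * k) := by
      linear_combination q ^ 2 * hn - 2 * α * hk + hpq +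
        (2 * μ * p * q - 2 * d * q ^ 2) * hα2
    have hdvd : (2 * a) ^ 2 ∣ (μ * q - p) ^ 2 := ⟨_, hsq⟩
    exact (Int.pow_dvd_pow_iff two_ne_zero).mp hdvd
  · rintro ⟨t, ht⟩
    refine ⟨α * (n * q ^ 2 - t ^ 2), ?_⟩
    have h2 : 2 * (μ * (α * p * q) - (2 * a + α * d * q ^ 2)) =
        2 * (2 * a ^ 2 * (α * (n * q ^ 2 - t ^ 2))) := by
      linear_combination α * q ^ 2 * hn + α * (p - μ * q - 2 * a * t) * ht +
        α * hpq + 4 * a * hα2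
    linarith
end

section
/- Let a > 1 be an integer, μ an integer coprime to 2a², d a positive integer with d ≡ μ² (mod 4a²), and α ∈ {1, −1}. Suppose (p,q) are integers with p² − d q² = 4a/α and 2a divides p − μ q. Then p ((p − μq)/(2a)) ≡ α (mod a). -/
theorem stmt_5 (a d μ α p q : ℤ) (ha : 1 < a) (hd : 0 < d)
    (hμ : IsCoprime μ (2 * a ^ 2)) (hdμ : d ≡ μ ^ 2 [ZMOD 4 * a ^ 2])
    (hα : α = 1 ∨ α = -1)
    (hpq : p ^ 2 - d * q ^ 2 = 4 * a * α)
    (hdiv : 2 * a ∣ p - μ * q) :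
    p * ((p - μ * q) / (2 * a)) ≡ α [ZMOD a] := by
  obtain ⟨k, hk⟩ := hdiv
  obtain ⟨m, hm⟩ := hdμ.dvd
  have ha0 : (2 * a : ℤ) ≠ 0 := by positivity
  have hdivk : (p - μ * q) / (2 * a) = k := by
    rw [hk, Int.mul_ediv_cancel_left _ ha0]
  rw [hdivk]
  have h4a : (4 * a : ℤ) ≠ 0 := by positivity
  have key : 4 * a * (α - p * k) = 4 * a * (a * (m * q ^ 2 - k ^ 2)) := by
    linear_combination -hpq + q ^ 2 * hm + (p + μ * q - 2 * a * k) * hk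
  have key' : α - p * k = a * (m * q ^ 2 - k ^ 2) := mul_left_cancel₀ h4a key
  exact Int.modEq_iff_dvd.mpr ⟨m * q ^ 2 - k ^ 2, key'⟩
end

section
/- Let a > 1 be an even integer, μ an integer coprime to 2a², d a positive integer with d ≡ μ² (mod 4a²), and α ∈ {2, −2}. Then there are no integers (p,q) with p² − d q² = 4a/α, a | p − μq, and 2 ≡ α p ((p − μq)/a) (mod 2a). -/
theorem stmt_6 (a d μ α : ℤ) (ha : 1 < a) (haeven : Even a) (hd : 0 < d)
    (hμ : IsCoprime μ (2 * a ^ 2)) (hdμ : d ≡ μ ^ 2 [ZMOD 4 * a ^ 2])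
    (hα : α = 2 ∨ α = -2) :
    ¬∃ p q : ℤ, p ^ 2 - d * q ^ 2 = a * α ∧ a ∣ p - μ * q ∧
      (2 : ℤ) ≡ α * p * ((p - μ * q) / a) [ZMOD 2 * a] := by
  rintro ⟨p, q, h1, ⟨k, hk⟩, h3⟩
  have ha0 : a ≠ 0 := by omega
  obtain ⟨s, hs, hs2⟩ : ∃ s : ℤ, α = 2 * s ∧ s * s = 1 := by
    rcases hα with h | h
    · exact ⟨1, by omega, by ring⟩
    · exact ⟨-1, by omega, by ring⟩
  have hdiv : (p - μ * q) / a = k := by rw [hk, Int.mul_ediv_cancel_left _ ha0]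
  rw [hdiv] at h3
  obtain ⟨w, hw⟩ : 2 * a ∣ α * p * k - 2 := Int.ModEq.dvd h3
  obtain ⟨t, ht⟩ : 4 * a ^ 2 ∣ μ ^ 2 - d := Int.ModEq.dvd hdμ
  have hspk2 : 2 * (s * p * k) = 2 * (1 + a * w) := by linear_combination hw - p * k * hs
  have hspk : s * p * k = 1 + a * w := by
    have h2 : (2 : ℤ) ≠ 0 := two_ne_zero
    exact mul_left_cancel₀ h2 hspk2
  have hoddspk : Odd (s * p * k) := by
    obtain ⟨c, hc⟩ := haeven
    exact ⟨c * w, by rw [hspk, hc]; ring⟩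
  have hoddk : Odd k := (Int.odd_mul.mp hoddspk).2
  have hp : p = μ * q + a * k := by linarith
  subst hp
  have key : a * (4 * a * t * q ^ 2 + 2 * μ * q * k + a * k ^ 2) = a * α := by
    linear_combination h1 - q ^ 2 * ht
  have hE : 4 * a * t * q ^ 2 + 2 * μ * q * k + a * k ^ 2 = α := mul_left_cancel₀ ha0 key
  have hμqk : μ * q * k = s + a * (s * w - k ^ 2) := by
    linear_combination s * hspk + (-(μ * q + a * k) * k) * hs2
  have h0 : a * (k ^ 2 - 2 * (2 * t * q ^ 2 + s * w)) = 0 := by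
    linear_combination (-1 : ℤ) * hE + 2 * hμqk - hs
  have hk2 : k ^ 2 = 2 * (2 * t * q ^ 2 + s * w) := by
    rcases mul_eq_zero.mp h0 with h | h
    · exact absurd h ha0
    · linarith
  have hevenk : Even k := by
    have : Even (k ^ 2) := ⟨2 * t * q ^ 2 + s * w, by linarith⟩
    exact (Int.even_pow.mp this).1
  obtain ⟨i, hi⟩ := hevenk
  obtain ⟨j, hj⟩ := hoddk
  omega
end

section
/- Let a > 1, μ coprime to 2a², d ≡ μ² (mod 4a²) a positive integer, α ∈ {1, −1}, and (p,q) integers with p² − d q² = 4a/α and p ≡ μ q (mod 2a). Then gcd(a, p) = 1, gcd(a, q) = 1, and gcd(p, q) divides 2; moreover if a is even then gcd(p,q) = 1. -/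
/-!
Write `p = μ q - 2 a t` and `d = μ² - 4 a² m`. Expanding, `p² - d q² = 4 a (a (t² + m q²) - μ q t)`,
so the norm equation becomes `a (t² + m q²) - μ q t = α`, a Bézout relation between `a` and `q`
(and, substituting `μ q t = p t + 2 a t²`, between `a` and `p`) with unit right-hand side.
Any common divisor `g` of `p` and `q` then satisfies `g² ∣ 4 a` and is coprime to `a`, so `g² ∣ 4`;
when `a` is even, `g ∣ 2 ∣ a` and `g ∣ q` force `g = 1`.
-/

theorem isCoprime_of_mul_add_mul_eq_isUnit {R : Type*} [CommSemiring R] {a b x y u : R}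
    (hu : IsUnit u) (h : x * a + y * b = u) : IsCoprime a b := by
  obtain ⟨v, rfl⟩ := hu
  exact ⟨↑v⁻¹ * x, ↑v⁻¹ * y, by rw [mul_assoc, mul_assoc, ← mul_add, h, Units.inv_mul]⟩

section NormEquation

variable {a d μ u p q : ℤ}

theorem exists_eq_and_mul_sub_eq_of_sq_sub_mul_sq_eq (ha : a ≠ 0)
    (hdμ : d ≡ μ ^ 2 [ZMOD 4 * a ^ 2]) (hcong : p ≡ μ * q [ZMOD 2 * a])
    (hpq : p ^ 2 - d * q ^ 2 = 4 * a * u) :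
    ∃ t s : ℤ, p = μ * q - 2 * a * t ∧ a * s - μ * q * t = u := by
  obtain ⟨t, ht⟩ := hcong.dvd
  obtain ⟨m, hm⟩ := hdμ.dvd
  have hp : p = μ * q - 2 * a * t := by linarith
  have hd : d = μ ^ 2 - 4 * a ^ 2 * m := by linarith
  refine ⟨t, t ^ 2 + m * q ^ 2, hp, mul_left_cancel₀ (mul_ne_zero four_ne_zero ha) ?_⟩
  subst hp hd
  linear_combination hpq

theorem isCoprime_of_sq_sub_mul_sq_eq (ha : a ≠ 0) (hu : IsUnit u)
    (hdμ : d ≡ μ ^ 2 [ZMOD 4 * a ^ 2]) (hcong : p ≡ μ * q [ZMOD 2 * a])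
    (hpq : p ^ 2 - d * q ^ 2 = 4 * a * u) :
    IsCoprime a p ∧ IsCoprime a q := by
  obtain ⟨t, s, rfl, hs⟩ := exists_eq_and_mul_sub_eq_of_sq_sub_mul_sq_eq ha hdμ hcong hpq
  exact ⟨isCoprime_of_mul_add_mul_eq_isUnit (x := s - 2 * t ^ 2) (y := -t) hu
      (by linear_combination hs),
    isCoprime_of_mul_add_mul_eq_isUnit (x := s) (y := -(μ * t)) hu (by linear_combination hs)⟩

theorem gcd_dvd_two_of_sq_sub_mul_sq_eq (hu : IsUnit u) (haq : IsCoprime a q)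
    (hpq : p ^ 2 - d * q ^ 2 = 4 * a * u) : (Int.gcd p q : ℤ) ∣ 2 := by
  set g : ℤ := ↑(Int.gcd p q)
  have hgq : g ∣ q := Int.gcd_dvd_right p q
  have hg4a : g ^ 2 ∣ 4 * a := by
    rw [← hu.dvd_mul_right, ← hpq]
    exact dvd_sub (pow_dvd_pow_of_dvd (Int.gcd_dvd_left p q) 2)
      ((pow_dvd_pow_of_dvd hgq 2).mul_left d)
  have hga : IsCoprime (g ^ 2) a := (haq.of_isCoprime_of_dvd_right hgq).pow_right.symm
  rw [← Int.pow_dvd_pow_iff two_ne_zero]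
  exact hga.dvd_of_dvd_mul_right (by norm_num [hg4a])

end NormEquation

theorem stmt_9_general (a d μ α p q : ℤ) (ha : 1 < a)
    (hdμ : d ≡ μ ^ 2 [ZMOD 4 * a ^ 2]) (hα : α = 1 ∨ α = -1)
    (hpq : p ^ 2 - d * q ^ 2 = 4 * a * α)
    (hcong : p ≡ μ * q [ZMOD 2 * a]) :
    IsCoprime a p ∧ IsCoprime a q ∧ (Int.gcd p q : ℤ) ∣ 2 ∧
      (Even a → Int.gcd p q = 1) := by
  have hu : IsUnit α := Int.isUnit_iff.mpr hα
  obtain ⟨hap, haq⟩ := isCoprime_of_sq_sub_mul_sq_eq (by positivity) hu hdμ hcong hpq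
  have hg2 := gcd_dvd_two_of_sq_sub_mul_sq_eq hu haq hpq
  refine ⟨hap, haq, hg2, fun hae => ?_⟩
  have hga : (Int.gcd p q : ℤ) ∣ a := hg2.trans (even_iff_two_dvd.mp hae)
  simpa using Int.isUnit_iff_natAbs_eq.mp (haq.isUnit_of_dvd' hga (Int.gcd_dvd_right p q))

theorem stmt_9 (a d μ α p q : ℤ) (ha : 1 < a)
    (hμ : IsCoprime μ (2 * a ^ 2)) (hd : 0 < d)
    (hdμ : d ≡ μ ^ 2 [ZMOD 4 * a ^ 2]) (hα : α = 1 ∨ α = -1)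
    (hpq : p ^ 2 - d * q ^ 2 = 4 * a * α)
    (hcong : p ≡ μ * q [ZMOD 2 * a]) :
    IsCoprime a p ∧ IsCoprime a q ∧ (Int.gcd p q : ℤ) ∣ 2 ∧
      (Even a → Int.gcd p q = 1) :=
  stmt_9_general a d μ α p q ha hdμ hα hpq hcong
end

section
/- Let a > 1 be an integer, μ an integer coprime to 2a², and α ∈ {1, −1}. Then there are infinitely many positive integers d such that d ≡ μ² (mod 4a²) and the equation p² − d q² = 4a/α has an integer solution (p,q) with p ≡ μ q (mod 2a). In fact, for every integer t with tμ ≡ 1 (mod a), the number d = (μ + 2ta/α)² − 4a/α is such a d whenever it is positive. -/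
private lemma stmt_10_key (a μ α : ℤ) (ha : 1 < a) (hα : α = 1 ∨ α = -1)
    (t : ℤ) (ht : t * μ ≡ 1 [ZMOD a])
    (hd : 0 < (μ + 2 * t * a * α) ^ 2 - 4 * a * α) :
    ((μ + 2 * t * a * α) ^ 2 - 4 * a * α) ∈
      {d : ℤ | 0 < d ∧ d ≡ μ ^ 2 [ZMOD 4 * a ^ 2] ∧
        ∃ p q : ℤ, p ^ 2 - d * q ^ 2 = 4 * a * α ∧ p ≡ μ * q [ZMOD 2 * a]} := by
  have hα2 : α ^ 2 = 1 := by rcases hα with h | h <;> simp [h]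
  obtain ⟨k, hk⟩ := Int.modEq_iff_dvd.mp ht
  refine ⟨hd, ?_, μ + 2 * t * a * α, 1, by ring, ?_⟩
  · rw [Int.modEq_iff_dvd]
    exact ⟨α * k - t ^ 2, by linear_combination (4 * a * α) * hk - (4 * a ^ 2 * t ^ 2) * hα2⟩
  · rw [Int.modEq_iff_dvd]
    exact ⟨-(t * α), by ring⟩

theorem stmt_10 (a μ α : ℤ) (ha : 1 < a)
    (hμ : IsCoprime μ (2 * a ^ 2)) (hα : α = 1 ∨ α = -1) :
    {d : ℤ | 0 < d ∧ d ≡ μ ^ 2 [ZMOD 4 * a ^ 2] ∧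
      ∃ p q : ℤ, p ^ 2 - d * q ^ 2 = 4 * a * α ∧ p ≡ μ * q [ZMOD 2 * a]}.Infinite ∧
    ∀ t : ℤ, t * μ ≡ 1 [ZMOD a] →
      0 < (μ + 2 * t * a * α) ^ 2 - 4 * a * α →
      ((μ + 2 * t * a * α) ^ 2 - 4 * a * α) ∈
        {d : ℤ | 0 < d ∧ d ≡ μ ^ 2 [ZMOD 4 * a ^ 2] ∧
          ∃ p q : ℤ, p ^ 2 - d * q ^ 2 = 4 * a * α ∧ p ≡ μ * q [ZMOD 2 * a]} := by
  have hα2 : α ^ 2 = 1 := by rcases hα with h | h <;> simp [h]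
  constructor
  · have hμa : IsCoprime μ a := hμ.of_isCoprime_of_dvd_right ⟨2 * a, by ring⟩
    obtain ⟨u, v, huv⟩ := hμa
    set N : ℕ := (4 * a - (μ + 2 * u * a * α)).toNat + 1 with hNdef
    have hN : 4 * a - (μ + 2 * u * a * α) < (N : ℤ) := by
      have := Int.self_le_toNat (4 * a - (μ + 2 * u * a * α))
      rw [hNdef]
      push_cast
      omega
    have hpn : ∀ n : ℕ, μ + 2 * (u + α * a * ((n : ℤ) + N)) * a * α
        = (μ + 2 * u * a * α) + 2 * a ^ 2 * ((n : ℤ) + N) := by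
      intro n
      linear_combination (2 * a ^ 2 * ((n : ℤ) + N)) * hα2
    have hbig : ∀ n : ℕ, 4 * a < μ + 2 * (u + α * a * ((n : ℤ) + N)) * a * α := by
      intro n
      rw [hpn]
      have h1 : (0 : ℤ) ≤ (n : ℤ) := Int.natCast_nonneg n
      have h2 : (0 : ℤ) ≤ (N : ℤ) := Int.natCast_nonneg N
      nlinarith [mul_nonneg (by nlinarith : (0:ℤ) ≤ 2 * a ^ 2 - 1) (by linarith : (0:ℤ) ≤ (n:ℤ) + N)]
    have ht : ∀ n : ℕ, (u + α * a * ((n : ℤ) + N)) * μ ≡ 1 [ZMOD a] := by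
      intro n
      rw [Int.modEq_iff_dvd]
      exact ⟨v - α * ((n : ℤ) + N) * μ, by linear_combination -huv⟩
    have hd : ∀ n : ℕ,
        0 < (μ + 2 * (u + α * a * ((n : ℤ) + N)) * a * α) ^ 2 - 4 * a * α := by
      intro n
      have h1 := hbig n
      rcases hα with h | h <;> rw [h] <;> rw [h] at h1 <;> nlinarith
    apply Set.infinite_of_injective_forall_mem
      (f := fun n : ℕ =>
        (μ + 2 * (u + α * a * ((n : ℤ) + N)) * a * α) ^ 2 - 4 * a * α)
    · have hmono : StrictMono (fun n : ℕ =>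
          (μ + 2 * (u + α * a * ((n : ℤ) + N)) * a * α) ^ 2 - 4 * a * α) := by
        intro m n hmn
        have h1 := hbig m
        have h2 := hbig n
        have hmn' : (m : ℤ) < n := by exact_mod_cast hmn
        have h3 : μ + 2 * (u + α * a * ((m : ℤ) + N)) * a * α
            < μ + 2 * (u + α * a * ((n : ℤ) + N)) * a * α := by
          rw [hpn, hpn]; nlinarith
        simp only
        nlinarith
      exact hmono.injective
    · intro n
      exact stmt_10_key a μ α ha hα (u + α * a * ((n : ℤ) + N)) (ht n) (hd n)
  · intro t ht hd
    exact stmt_10_key a μ α ha hα t ht hd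
end

section
/- Let a > 1 be an integer, μ coprime to 2a², α ∈ {1, −1}, and t an integer with t μ ≡ 1 (mod a). Set p = μ + 2ta/α and d = p² − 4a/α. Then d ≡ μ² (mod 4a²) and p ≡ μ·1 (mod 2a), i.e. (p, 1) solves p² − d·1² = 4a/α with the required congruence. -/
theorem stmt_11 (a μ α t : ℤ) (ha : 1 < a)
    (hμ : IsCoprime μ (2 * a ^ 2)) (hα : α = 1 ∨ α = -1)
    (ht : t * μ ≡ 1 [ZMOD a]) :
    ((μ + 2 * t * a * α) ^ 2 - 4 * a * α) ≡ μ ^ 2 [ZMOD 4 * a ^ 2] ∧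
    (μ + 2 * t * a * α) ≡ μ * 1 [ZMOD 2 * a] ∧
    (μ + 2 * t * a * α) ^ 2 - ((μ + 2 * t * a * α) ^ 2 - 4 * a * α) * 1 ^ 2
      = 4 * a * α := by
  obtain ⟨k, hk⟩ : a ∣ 1 - t * μ := ht.dvd
  refine ⟨Int.modEq_iff_dvd.mpr ⟨α * k - t ^ 2 * α ^ 2, by linear_combination (4*a*α) * hk⟩, ?_, by ring⟩
  · exact Int.ModEq.symm (Int.modEq_iff_dvd.mpr ⟨t * α, by ring⟩)
end

section
/- Let a > 1, μ coprime to 2a², d ≡ μ² (mod 4a²) positive, α ∈ {1,−1}, and let ν ≡ μ (mod 2a). If (p,q) is a primitive integer solution of p² − d q² = 4a/α (gcd(p,q)=1) with p ≡ ν q (mod 2a), then ν² ≡ d (mod 4a), and there is a unique residue μ' mod 2a² with μ' ≡ ν (mod 2a) and μ'² ≡ d (mod 4a²), determined by ν k ≡ (d − ν²)/(4a) (mod a) where μ' = ν + 2ak. -/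
theorem stmt_16 (a d μ ν α p q : ℤ) (ha : 1 < a) (hd : 0 < d)
    (hμ : IsCoprime μ (2 * a ^ 2)) (hdμ : d ≡ μ ^ 2 [ZMOD 4 * a ^ 2])
    (hα : α = 1 ∨ α = -1) (hν : ν ≡ μ [ZMOD 2 * a])
    (hprim : Int.gcd p q = 1) (hpq : p ^ 2 - d * q ^ 2 = 4 * a * α)
    (hcong : p ≡ ν * q [ZMOD 2 * a]) :
    ν ^ 2 ≡ d [ZMOD 4 * a] ∧
    (∃ μ' : ℤ, (μ' ≡ ν [ZMOD 2 * a] ∧ μ' ^ 2 ≡ d [ZMOD 4 * a ^ 2]) ∧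
      (∀ μ'' : ℤ, μ'' ≡ ν [ZMOD 2 * a] ∧ μ'' ^ 2 ≡ d [ZMOD 4 * a ^ 2] →
        μ'' ≡ μ' [ZMOD 2 * a ^ 2]) ∧
      (∀ k : ℤ, μ' ≡ ν + 2 * a * k [ZMOD 2 * a ^ 2] ↔
        ν * k ≡ (d - ν ^ 2) / (4 * a) [ZMOD a])) := by
  have ha0 : a ≠ 0 := by omega
  have h2a0 : (2 * a : ℤ) ≠ 0 := by omega
  have h4a0 : (4 * a : ℤ) ≠ 0 := by omega
  obtain ⟨t, ht⟩ := Int.modEq_iff_dvd.mp hν   -- μ - ν = 2*a*t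
  obtain ⟨s, hs⟩ := Int.modEq_iff_dvd.mp hdμ  -- μ^2 - d = 4*a^2*s
  have hμeq : μ = ν + 2 * a * t := by linarith
  subst hμeq
  have key : d - ν ^ 2 = 4 * a * (ν * t + a * t ^ 2 - a * s) := by
    linear_combination -hs
  have part1 : ν ^ 2 ≡ d [ZMOD 4 * a] := Int.modEq_iff_dvd.mpr ⟨_, key⟩
  set e : ℤ := (d - ν ^ 2) / (4 * a) with he
  have hE : 4 * a * e = d - ν ^ 2 := Int.mul_ediv_cancel' ⟨_, key⟩
  have hca : IsCoprime ν a := by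
    have h1 : IsCoprime (ν + 2 * a * t) (a * (2 * a)) := by
      have h : a * (2 * a) = 2 * a ^ 2 := by ring
      rwa [h]
    have h2 : IsCoprime (ν + 2 * a * t) a := h1.of_mul_right_left
    have h3 : ν = (ν + 2 * a * t) + a * (-2 * t) := by ring
    rw [h3]; exact h2.add_mul_left_left _
  obtain ⟨u, v, huv⟩ := id hca
  have hk0 : ν * (u * e) - e = a * (-(e * v)) := by linear_combination e * huv
  refine ⟨part1, ν + 2 * a * (u * e), ⟨?_, ?_⟩, ?_, ?_⟩
  · exact Int.modEq_iff_dvd.mpr ⟨-(u * e), by ring⟩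
  · refine Int.modEq_iff_dvd.mpr ⟨e * v - (u * e) ^ 2, ?_⟩
    linear_combination -hE - 4 * a * hk0
  · rintro μ'' ⟨h1'', h2''⟩
    obtain ⟨k'', hk''⟩ := Int.modEq_iff_dvd.mp h1''  -- ν - μ'' = 2*a*k''
    obtain ⟨w, hw⟩ := Int.modEq_iff_dvd.mp h2''      -- d - μ''^2 = 4*a^2*w
    have hμ''eq : μ'' = ν - 2 * a * k'' := by linarith
    subst hμ''eq
    have h4 : (4 * a) * (ν * (-k'') - e) = (4 * a) * (a * (-(w + k'' ^ 2))) := by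
      linear_combination -hw - hE
    have h5 : ν * (-k'') - e = a * (-(w + k'' ^ 2)) := mul_left_cancel₀ h4a0 h4
    have h6 : a ∣ ν * (-k'' - u * e) :=
      ⟨-(w + k'' ^ 2) + e * v, by linear_combination h5 - hk0⟩
    have h7 : a ∣ (-k'') - u * e := hca.symm.dvd_of_dvd_mul_left h6
    obtain ⟨z, hz⟩ := h7
    exact Int.modEq_iff_dvd.mpr ⟨-z, by linear_combination -2 * a * hz⟩
  · intro k
    constructor
    · intro h
      obtain ⟨z, hz⟩ := Int.modEq_iff_dvd.mp h
      -- (ν + 2*a*k) - (ν + 2*a*(u*e)) = 2*a^2*z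
      have hz' : k - u * e = a * z := by
        have : (2 * a) * (k - u * e) = (2 * a) * (a * z) := by linear_combination hz
        exact mul_left_cancel₀ h2a0 this
      refine Int.modEq_iff_dvd.mpr ⟨-(ν * z) + e * v, ?_⟩
      linear_combination (-ν) * hz' - hk0
    · intro h
      obtain ⟨z, hz⟩ := Int.modEq_iff_dvd.mp h   -- e - ν*k = a*z
      have h6 : a ∣ ν * (k - u * e) := ⟨-z - (-(e * v)), by linear_combination -hz - hk0⟩
      have h7 : a ∣ k - u * e := hca.symm.dvd_of_dvd_mul_left h6
      obtain ⟨y, hy⟩ := h7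
      exact Int.modEq_iff_dvd.mpr ⟨y, by linear_combination 2 * a * hy⟩
end

section
/- Let a > 1 and α ∈ {1,−1}, let d be a positive integer, and let (p,q) be integers with p² − d q² = 4a/α, and suppose a | p − μq and ((p − μq)/a)·p·α ≡ 2 (mod 2a) for some μ with μ² ≡ d (mod 4a²), gcd(μ, 2a²)=1. Then 2a | p − μq. -/
theorem stmt_18 (a d μ α p q : ℤ) (ha : 1 < a) (hd : 0 < d)
    (hα : α = 1 ∨ α = -1)
    (hμ : IsCoprime μ (2 * a ^ 2)) (hdμ : μ ^ 2 ≡ d [ZMOD 4 * a ^ 2])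
    (hpq : p ^ 2 - d * q ^ 2 = 4 * a * α)
    (hdiv : a ∣ p - μ * q)
    (hcong : ((p - μ * q) / a) * p * α ≡ 2 [ZMOD 2 * a]) :
    2 * a ∣ p - μ * q := by
  obtain ⟨k, hk⟩ := hdiv
  have ha0 : a ≠ 0 := by omega
  have hdivq : (p - μ * q) / a = k := by
    rw [hk]; exact Int.mul_ediv_cancel_left k ha0
  rw [hdivq] at hcong
  have hα2 : α * α = 1 := by rcases hα with h | h <;> simp [h]
  -- 4a² ∣ d - μ²
  obtain ⟨m, hm⟩ := Int.ModEq.dvd hdμ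
  -- hm : d - μ^2 = 4*a^2*m
  have h1 : (2 * a) ∣ 2 - k * p * α := Int.ModEq.dvd hcong
  have h1' : (2 * a) ∣ 2 * α - k * p := by
    obtain ⟨c, hc⟩ := h1
    exact ⟨c * α, by linear_combination α * hc + k * p * hα2⟩
  obtain ⟨c, hc⟩ := h1'
  -- key identity: a * (2μqk + a k² - 4 a m q²) = a * (4α)
  have hEa : a * (2 * μ * q * k + a * k ^ 2 - 4 * a * m * q ^ 2) = a * (4 * α) := by
    linear_combination hpq + q ^ 2 * hm - (p + μ * q + a * k) * hk
  have hE : 2 * μ * q * k + a * k ^ 2 - 4 * a * m * q ^ 2 = 4 * α :=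
    mul_left_cancel₀ ha0 hEa
  have hk2 : a * k ^ 2 = a * (2 * (-2 * c - 2 * m * q ^ 2)) := by
    linear_combination -2 * k * hk - hE - 2 * hc
  have hkk : k ^ 2 = 2 * (-2 * c - 2 * m * q ^ 2) := mul_left_cancel₀ ha0 hk2
  have h2k : (2 : ℤ) ∣ k := by
    have : (2 : ℤ) ∣ k * k := ⟨-2 * c - 2 * m * q ^ 2, by linear_combination hkk⟩
    exact (Int.prime_two.dvd_mul.mp this).elim id id
  obtain ⟨t, ht⟩ := h2k
  exact ⟨t, by rw [hk, ht]; ring⟩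
end

section
/- Let d ≡ 1 (mod 4) be a positive non-square integer and a > 1. If the Pell-type equation p² − d q² = 4a (or p² − d q² = −4a) has one integer solution (p,q) with p ≡ μ q (mod 2a) (for μ with μ² ≡ d mod 4a², gcd(μ,2a²)=1), then it has infinitely many such integer solutions. -/
theorem stmt_19 (a d μ ε : ℤ) (ha : 1 < a) (hd : 0 < d)
    (hd1 : d ≡ 1 [ZMOD 4]) (hdns : ¬IsSquare d)
    (hμ : IsCoprime μ (2 * a ^ 2)) (hdμ : μ ^ 2 ≡ d [ZMOD 4 * a ^ 2])
    (hε : ε = 1 ∨ ε = -1)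
    (hex : ∃ p q : ℤ, p ^ 2 - d * q ^ 2 = 4 * a * ε ∧ p ≡ μ * q [ZMOD 2 * a]) :
    {pq : ℤ × ℤ | pq.1 ^ 2 - d * pq.2 ^ 2 = 4 * a * ε ∧
      pq.1 ≡ μ * pq.2 [ZMOD 2 * a]}.Infinite := by
  obtain ⟨x₀, y₀, hxy₀, hy₀⟩ := Pell.exists_of_not_isSquare hd hdns
  set x : ℤ := |x₀| with hxdef
  set y : ℤ := |y₀| with hydef
  have hxy : x ^ 2 - d * y ^ 2 = 1 := by
    rw [hxdef, hydef, sq_abs, sq_abs]; exact hxy₀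
  have hy1 : 1 ≤ y := by
    rw [hydef]; exact Int.one_le_abs hy₀
  have hx0 : 0 ≤ x := abs_nonneg _
  have hx2 : 2 ≤ x := by nlinarith
  have hne : (4 : ℤ) * a * ε ≠ 0 := by
    rcases hε with h | h <;> subst h <;> intro hh <;> omega
  have h4 : (4 * a ^ 2) ∣ d - μ ^ 2 := Int.ModEq.dvd hdμ
  have h2 : (2 * a) ∣ d - μ ^ 2 := dvd_trans ⟨2 * a, by ring⟩ h4
  obtain ⟨m, hm⟩ := h2
  -- step: from a solution with nonnegative q, get one with strictly larger q
  have step : ∀ p q : ℤ, p ^ 2 - d * q ^ 2 = 4 * a * ε → p ≡ μ * q [ZMOD 2 * a] →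
      0 ≤ q → ∃ p' q' : ℤ, p' ^ 2 - d * q' ^ 2 = 4 * a * ε ∧
        p' ≡ μ * q' [ZMOD 2 * a] ∧ q < q' := by
    intro p q hpq hc hq
    obtain ⟨k, hk⟩ : (2 * a) ∣ μ * q - p := Int.ModEq.dvd hc
    have hnz : ¬(p = 0 ∧ q = 0) := by
      rintro ⟨rfl, rfl⟩
      exact hne (by linarith)
    rcases le_or_gt 0 p with hp | hp
    · refine ⟨p * x + q * y * d, p * y + q * x, ?_, ?_, ?_⟩
      · linear_combination (x ^ 2 - d * y ^ 2) * hpq + (4 * a * ε) * hxy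
      · rw [Int.modEq_iff_dvd]
        exact ⟨(x - μ * y) * k - y * q * m, by linear_combination (x - μ * y) * hk - y * q * hm⟩
      · rcases eq_or_lt_of_le hp with hp0 | hp0
        · have hq0 : q ≠ 0 := by intro h; exact hnz ⟨hp0.symm, h⟩
          have : 1 ≤ q := by omega
          nlinarith
        · nlinarith
    · refine ⟨p * x - q * y * d, -(p * y) + q * x, ?_, ?_, ?_⟩
      · linear_combination (x ^ 2 - d * y ^ 2) * hpq + (4 * a * ε) * hxy
      · rw [Int.modEq_iff_dvd]
        exact ⟨(x + μ * y) * k + y * q * m, by linear_combination (x + μ * y) * hk + y * q * hm⟩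
      · nlinarith
  -- base case with nonnegative q
  obtain ⟨p₀, q₀, hp₀, hc₀⟩ := hex
  have base : ∃ p q : ℤ, p ^ 2 - d * q ^ 2 = 4 * a * ε ∧
      p ≡ μ * q [ZMOD 2 * a] ∧ 0 ≤ q := by
    rcases le_or_gt 0 q₀ with h | h
    · exact ⟨p₀, q₀, hp₀, hc₀, h⟩
    · exact ⟨-p₀, -q₀, by linear_combination hp₀, by simpa [mul_neg] using hc₀.neg, by omega⟩
  -- for each n, a solution with q ≥ n
  have H : ∀ n : ℕ, ∃ p q : ℤ, p ^ 2 - d * q ^ 2 = 4 * a * ε ∧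
      p ≡ μ * q [ZMOD 2 * a] ∧ (n : ℤ) ≤ q := by
    intro n
    induction n with
    | zero => simpa using base
    | succ n ih =>
      obtain ⟨p, q, h1, h2, h3⟩ := ih
      have hq0 : 0 ≤ q := le_trans (by positivity) h3
      obtain ⟨p', q', h1', h2', h3'⟩ := step p q h1 h2 hq0
      exact ⟨p', q', h1', h2', by push_cast; omega⟩
  -- conclude
  intro hfin
  have himg : (Prod.snd '' {pq : ℤ × ℤ | pq.1 ^ 2 - d * pq.2 ^ 2 = 4 * a * ε ∧
      pq.1 ≡ μ * pq.2 [ZMOD 2 * a]}).Finite := hfin.image _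
  obtain ⟨M, hM⟩ := himg.bddAbove
  obtain ⟨p, q, h1, h2, h3⟩ := H (M + 1).toNat
  have hq : q ≤ M := hM ⟨(p, q), ⟨h1, h2⟩, rfl⟩
  have := Int.self_le_toNat (M + 1)
  omega
end
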